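/- Let n ≥ 2 and m ∈ ℚ. If p ≠ 3 is a prime with p-adic valuation v_p(m² + m + 1) = 1, then v_p(r^{(n)}(m)) = 0 and v_p(f_m^{(n)}(m)) = 1. -/
import Mathlib


open Polynomial

/-- h(i) = 0, -1, -1, 0, 1, 1 according as i = 0,1,2,3,4,5 (mod 6). -/
def hcoef (i : ℕ) : ℤ :=
  match i % 6 with
  | 0 => 0 | 1 => -1 | 2 => -1 | 3 => 0 | 4 => 1 | _ => 1

/-- g(i) = 1, -m, -m-1, -1, m, m+1 according as i = 0,1,2,3,4,5 (mod 6). -/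
def gcoef (m : ℚ) (i : ℕ) : ℚ :=
  match i % 6 with
  | 0 => 1 | 1 => -m | 2 => -m - 1 | 3 => -1 | 4 => m | _ => m + 1

/-- f_m^{(n)}(X) = sum_{i=0}^n C(n,i) X^i g(n-i). -/
noncomputable def fpol (m : ℚ) (n : ℕ) : ℚ[X] :=
  ∑ i ∈ Finset.range (n + 1), C ((n.choose i : ℚ) * gcoef m (n - i)) * X ^ i

/-- r^{(n)}(X) = sum_{i=0}^n C(n,i) X^i h(n-i). -/
noncomputable def rpol (n : ℕ) : ℤ[X] :=
  ∑ i ∈ Finset.range (n + 1), C ((n.choose i : ℤ) * hcoef (n - i)) * X ^ i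

lemma hcoef_rec (k : ℕ) : hcoef (k+2) = hcoef (k+1) - hcoef k := by
  have h2 : (k+2) % 6 = (k % 6 + 2) % 6 := by omega
  have h1 : (k+1) % 6 = (k % 6 + 1) % 6 := by omega
  have h : k % 6 = 0 ∨ k % 6 = 1 ∨ k % 6 = 2 ∨ k % 6 = 3 ∨ k % 6 = 4 ∨ k % 6 = 5 := by omega
  unfold hcoef
  rw [h1, h2]
  rcases h with h|h|h|h|h|h <;> rw [h] <;> decide

lemma gcoef_rec (m : ℚ) (k : ℕ) : gcoef m (k+2) = gcoef m (k+1) - gcoef m k := by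
  have h2 : (k+2) % 6 = (k % 6 + 2) % 6 := by omega
  have h1 : (k+1) % 6 = (k % 6 + 1) % 6 := by omega
  have h : k % 6 = 0 ∨ k % 6 = 1 ∨ k % 6 = 2 ∨ k % 6 = 3 ∨ k % 6 = 4 ∨ k % 6 = 5 := by omega
  unfold gcoef
  rw [h1, h2]
  rcases h with h|h|h|h|h|h <;> rw [h] <;> norm_num <;> ring

@[simp] lemma gcoef_zero (m : ℚ) : gcoef m 0 = 1 := rfl
@[simp] lemma gcoef_one (m : ℚ) : gcoef m 1 = -m := rfl
@[simp] lemma gcoef_two (m : ℚ) : gcoef m 2 = -m - 1 := rfl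
@[simp] lemma hcoef_zero : hcoef 0 = 0 := rfl
@[simp] lemma hcoef_one : hcoef 1 = -1 := rfl

def Sx {R : Type*} [CommRing R] (x y : R) (g : ℕ → R) (n : ℕ) : R :=
  ∑ i ∈ Finset.range (n+1), (n.choose i : R) * x ^ i * y ^ (n-i) * g (n-i)

lemma Sx_succ {R : Type*} [CommRing R] (x y : R) (g : ℕ → R) (n : ℕ) :
    Sx x y g (n+1) = x * Sx x y g n + y * Sx x y (fun k => g (k+1)) n := by
  unfold Sx
  simp only []
  rw [Finset.sum_range_succ']
  have e1 : ∀ i ∈ Finset.range (n+1),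
      ((n+1).choose (i+1) : R) * x ^ (i+1) * y ^ (n+1-(i+1)) * g (n+1-(i+1))
      = (n.choose i : R) * x ^ (i+1) * y ^ (n-i) * g (n-i)
        + (n.choose (i+1) : R) * x ^ (i+1) * y ^ (n-i) * g (n-i) := by
    intro i hi
    have h : n + 1 - (i+1) = n - i := by omega
    rw [Nat.choose_succ_succ]
    simp only [h]
    push_cast
    ring
  rw [Finset.sum_congr rfl e1, Finset.sum_add_distrib]
  have e2 : ∑ i ∈ Finset.range (n+1), (n.choose i : R) * x ^ (i+1) * y ^ (n-i) * g (n-i)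
      = x * ∑ i ∈ Finset.range (n+1), (n.choose i : R) * x ^ i * y ^ (n-i) * g (n-i) := by
    rw [Finset.mul_sum]; exact Finset.sum_congr rfl fun i _ => by ring
  have eL : ∑ i ∈ Finset.range (n+1), (n.choose (i+1) : R) * x ^ (i+1) * y ^ (n-i) * g (n-i)
      = ∑ i ∈ Finset.range n, (n.choose (i+1) : R) * x ^ (i+1) * y ^ (n-i) * g (n-i) := by
    rw [Finset.sum_range_succ]
    simp [Nat.choose_succ_self]
  have eR : y * ∑ i ∈ Finset.range (n+1), (n.choose i : R) * x ^ i * y ^ (n-i) * g (n-i+1)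
      = (∑ i ∈ Finset.range n, (n.choose (i+1) : R) * x ^ (i+1) * y ^ (n-i) * g (n-i))
        + y ^ (n+1) * g (n+1) := by
    rw [Finset.mul_sum, Finset.sum_range_succ']
    have e4 : ∀ i ∈ Finset.range n,
        y * ((n.choose (i+1) : R) * x ^ (i+1) * y ^ (n-(i+1)) * g (n-(i+1)+1))
        = (n.choose (i+1) : R) * x ^ (i+1) * y ^ (n-i) * g (n-i) := by
      intro i hi
      simp only [Finset.mem_range] at hi
      have h1 : n - (i+1) + 1 = n - i := by omega
      have h2 : y * y ^ (n - (i+1)) = y ^ (n - i) := by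
        rw [← pow_succ', show n - (i+1) + 1 = n - i from by omega]
      rw [h1, ← h2]; ring
    rw [Finset.sum_congr rfl e4]
    simp
    ring
  rw [eL, e2, eR]
  simp
  ring

lemma Sx_sub {R : Type*} [CommRing R] (x y : R) (a b : ℕ → R) (n : ℕ) :
    Sx x y (fun k => a k - b k) n = Sx x y a n - Sx x y b n := by
  unfold Sx
  rw [← Finset.sum_sub_distrib]
  exact Finset.sum_congr rfl fun i _ => by ring

lemma Sx_rec {R : Type*} [CommRing R] (x y : R) (g : ℕ → R)
    (hg : ∀ k, g (k+2) = g (k+1) - g k) (n : ℕ) :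
    Sx x y g (n+2) = (2*x + y) * Sx x y g (n+1) - (x^2 + x*y + y^2) * Sx x y g n := by
  have h1 := Sx_succ x y g (n+1)
  have h2 := Sx_succ x y (fun k => g (k+1)) n
  have h3 := Sx_succ x y g n
  have h4 : Sx x y (fun k => g (k+1+1)) n = Sx x y (fun k => g (k+1)) n - Sx x y g n := by
    rw [show (fun k => g (k+1+1)) = fun k => g (k+1) - g k from funext fun k => hg k, Sx_sub]
  linear_combination h1 + y*h2 + y^2*h4 - (x+y)*h3

lemma fpol_eval (m : ℚ) (n : ℕ) : (fpol m n).eval m = Sx m 1 (gcoef m) n := by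
  unfold fpol Sx
  rw [Polynomial.eval_finset_sum]
  exact Finset.sum_congr rfl fun i _ => by simp; ring

lemma rpol_aeval (m : ℚ) (n : ℕ) :
    aeval m (rpol n) = Sx m 1 (fun k => (hcoef k : ℚ)) n := by
  unfold rpol Sx
  rw [map_sum]
  refine Finset.sum_congr rfl fun i _ => ?_
  simp
  ring

lemma key_ident (m : ℚ) (n : ℕ) :
    Sx m 1 (gcoef m) (n+1) = (m^2 + m + 1) * Sx m 1 (fun k => (hcoef k : ℚ)) n := by
  induction n using Nat.twoStepInduction with
  | zero =>
    simp [Sx, Finset.sum_range_succ]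
  | one =>
    simp [Sx, Finset.sum_range_succ]
    ring
  | more k ih1 ih2 =>
    have hF := Sx_rec m 1 (gcoef m) (gcoef_rec m) (k+1)
    have hR := Sx_rec m 1 (fun j => (hcoef j : ℚ)) (fun j => by
      show ((hcoef (j+2) : ℚ)) = (hcoef (j+1) : ℚ) - (hcoef j : ℚ)
      exact_mod_cast hcoef_rec j) k
    rw [hF, hR, ih1, ih2]
    ring

theorem stmt16 (n : ℕ) (hn : 2 ≤ n) (m : ℚ) (p : ℕ) (hp : p.Prime) (hp3 : p ≠ 3)
    (hv : padicValRat p (m ^ 2 + m + 1) = 1) :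
    padicValRat p (aeval m (rpol n)) = 0 ∧
      padicValRat p ((fpol m n).eval m) = 1 := by
  haveI : Fact p.Prime := ⟨hp⟩
  have hpz : Prime (p : ℤ) := Int.prime_iff_natAbs_prime.mpr (by simpa using hp)
  set a : ℤ := m.num with ha
  set b : ℤ := (m.den : ℤ) with hb
  have hb0 : b ≠ 0 := by
    simp [hb]
  have hbq0 : (b : ℚ) ≠ 0 := by exact_mod_cast hb0
  have hm : m = (a : ℚ) / (b : ℚ) := by
    rw [ha, hb]; push_cast; exact (Rat.num_div_den m).symm
  have hc_pos : 0 < m ^ 2 + m + 1 := by nlinarith [sq_nonneg (2*m+1)]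
  have hc0 : m ^ 2 + m + 1 ≠ 0 := ne_of_gt hc_pos
  set K : ℤ := a^2 + a*b + b^2 with hKdef
  have hmK : m ^ 2 + m + 1 = (K : ℚ) / (b : ℚ)^2 := by
    rw [hm, hKdef]; push_cast; field_simp; try ring
  have hK0 : K ≠ 0 := by
    intro h
    rw [h] at hmK
    simp at hmK
    exact hc0 hmK
  have hveq : (1 : ℤ) = (padicValInt p K : ℤ) - (padicValInt p (b^2) : ℤ) := by
    rw [← hv, hmK]
    have hKq : (K : ℚ) ≠ 0 := by exact_mod_cast hK0
    have hbq : ((b:ℚ))^2 = (((b^2 : ℤ)) : ℚ) := by push_cast; ring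
    rw [hbq, padicValRat.div (by exact_mod_cast hK0) (by exact_mod_cast pow_ne_zero 2 hb0)]
    rw [padicValRat.of_int, padicValRat.of_int]
  -- p does not divide b
  have hpb : ¬ (p : ℤ) ∣ b := by
    intro hdvd
    have hpa : ¬ (p : ℤ) ∣ a := by
      intro hda
      have h1 : p ∣ m.num.natAbs := by
        have := Int.natAbs_dvd_natAbs.mpr hda
        simpa [ha] using this
      have h2 : p ∣ m.den := Int.ofNat_dvd.mp (by simpa [hb] using hdvd)
      have := Nat.Coprime.eq_one_of_dvd (Nat.Coprime.coprime_dvd_left h1 m.reduced) h2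
      exact hp.one_lt.ne' this
    have hpK : ¬ (p : ℤ) ∣ K := by
      intro hdK
      have : (p:ℤ) ∣ a^2 := by
        have : (p:ℤ) ∣ a*b + b^2 := by
          exact Dvd.dvd.add (Dvd.dvd.mul_left hdvd a) (dvd_pow hdvd two_ne_zero)
        have h := dvd_sub hdK this
        simpa [hKdef] using h
      exact hpa (hpz.dvd_of_dvd_pow this)
    rw [padicValInt.eq_zero_of_not_dvd hpK] at hveq
    have hb2 : (p:ℤ) ∣ b^2 := dvd_pow hdvd two_ne_zero
    omega
  have hpb2 : padicValInt p (b^2) = 0 :=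
    padicValInt.eq_zero_of_not_dvd (fun h => hpb (hpz.dvd_of_dvd_pow h))
  have hvK : padicValInt p K = 1 := by omega
  have hpK : (p : ℤ) ∣ K := by
    have := (padicValInt_dvd_iff (p := p) 1 K).mpr (Or.inr (by omega))
    simpa using this
  have hpab : ¬ (p : ℤ) ∣ (2*a + b) := by
    intro hdvd
    have h1 : (p:ℤ) ∣ (2*a+b)^2 := dvd_pow hdvd two_ne_zero
    have h2 : (p:ℤ) ∣ 3 * b^2 := by
      have : 3 * b^2 = 4 * K - (2*a+b)^2 := by rw [hKdef]; ring
      rw [this]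
      exact dvd_sub (Dvd.dvd.mul_left hpK 4) h1
    rcases hpz.dvd_mul.mp h2 with h3 | h3
    · have h4 : p ∣ 3 := Int.ofNat_dvd.mp (by exact_mod_cast h3)
      exact hp3 ((Nat.prime_dvd_prime_iff_eq hp (by norm_num)).mp h4)
    · exact hpb (hpz.dvd_of_dvd_pow h3)
  -- integer sequence
  have hZrec : ∀ k, (fun j => (hcoef j : ℤ)) (k+2) = (fun j => (hcoef j : ℤ)) (k+1) - (fun j => (hcoef j : ℤ)) k := fun k => hcoef_rec k
  have hRz : ∀ k : ℕ, ¬ (p : ℤ) ∣ Sx a b (fun j => hcoef j) (k+1) := by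
    intro k
    induction k with
    | zero =>
      have : Sx a b (fun j => hcoef j) 1 = -b := by
        simp [Sx, Finset.sum_range_succ]
      rw [this]
      simpa using hpb
    | succ k ih =>
      rw [Sx_rec a b _ (fun j => hcoef_rec j) k]
      intro hdvd
      have h1 : (p:ℤ) ∣ (a^2 + a*b + b^2) * Sx a b (fun j => hcoef j) k :=
        Dvd.dvd.mul_right hpK _
      have h2 : (p:ℤ) ∣ (2*a + b) * Sx a b (fun j => hcoef j) (k+1) := by
        have := dvd_add hdvd h1
        simpa using this
      rcases hpz.dvd_mul.mp h2 with h3 | h3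
      · exact hpab h3
      · exact ih h3
  -- relation between integer and rational sequences
  have hcast : ∀ k : ℕ, ((Sx a b (fun j => hcoef j) k : ℤ) : ℚ)
      = (b:ℚ)^k * Sx m 1 (fun j => (hcoef j : ℚ)) k := by
    intro k
    unfold Sx
    push_cast
    rw [Finset.mul_sum]
    refine Finset.sum_congr rfl fun i hi => ?_
    simp only [Finset.mem_range] at hi
    have hbk : (b:ℚ)^k = (b:ℚ)^i * (b:ℚ)^(k-i) := by
      rw [← pow_add]; congr 1; omega
    rw [hm, hbk, div_pow]
    field_simp
    ring
  have hRq0 : ∀ k : ℕ, padicValRat p (Sx m 1 (fun j => (hcoef j : ℚ)) (k+1)) = 0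
      ∧ Sx m 1 (fun j => (hcoef j : ℚ)) (k+1) ≠ 0 := by
    intro k
    have hz := hRz k
    have hz0 : Sx a b (fun j => hcoef j) (k+1) ≠ 0 := by
      intro h; rw [h] at hz; exact hz (dvd_zero _)
    have hq : Sx m 1 (fun j => (hcoef j : ℚ)) (k+1)
        = ((Sx a b (fun j => hcoef j) (k+1) : ℤ) : ℚ) / (b:ℚ)^(k+1) := by
      rw [hcast (k+1)]
      field_simp
    constructor
    · rw [hq]
      have hbkq : ((b:ℚ))^(k+1) = (((b^(k+1) : ℤ)) : ℚ) := by push_cast; ring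
      rw [hbkq, padicValRat.div (by exact_mod_cast hz0) (by exact_mod_cast pow_ne_zero _ hb0)]
      rw [padicValRat.of_int, padicValRat.of_int,
        padicValInt.eq_zero_of_not_dvd hz,
        padicValInt.eq_zero_of_not_dvd (fun h => hpb (hpz.dvd_of_dvd_pow h))]
      ring
    · rw [hq]
      exact div_ne_zero (by exact_mod_cast hz0) (pow_ne_zero _ hbq0)
  obtain ⟨k, rfl⟩ : ∃ k, n = k + 2 := ⟨n - 2, by omega⟩
  constructor
  · rw [rpol_aeval]
    exact (hRq0 (k+1)).1
  · rw [fpol_eval, show k + 2 = (k+1) + 1 from rfl, key_ident]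
    rw [padicValRat.mul hc0 (hRq0 k).2, hv, (hRq0 k).1]
    ring
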